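/- arXiv:2605.01811 — 12 statements merged into one kernel-verified Lean document; each statement's English description precedes it below -/
import Mathlib

section
/- Let $T_1 > 0$, $h_1 > 0$ and $h_0 \in \mathbb{R}$. Then each of the following functions satisfies the differential equation $h\,h'' - (h')^2 = 2 T_1 h^3$ at every point of its domain where it is defined: (a) $h(y) = \frac{1}{T_1 (y+h_0)^2}$ for $y \neq -h_0$; (b) $h(y) = \frac{h_1\left(\tanh^2(\sqrt{h_1}(y+h_0)) - 1\right)}{T_1}$ for all $y$ with $h(y) \neq 0$; (c) $h(y) = \frac{h_1\left(\tan^2(\sqrt{h_1}(y+h_0)) + 1\right)}{T_1}$ for all $y$ such that $\sqrt{h_1}(y+h_0)$ is not an odd multiple of $\pi/2$. -/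
/-!
If `u` solves `u u'' - (u')² = 2 u³`, then `k u(c (y + d))` solves `h h'' - (h')² = 2 T h³` as soon
as `T k = c²`: the left side scales by `k² c²`, the right side by `T k³`. With `c = √h₁`,
`k = h₁ / T₁` (and `c = 1`, `k = 1 / T₁` for the first family) this reduces the three families to the
model solutions `x⁻²`, `tanh² x - 1` and `tan² x + 1`. The last two are one computation: whenever
`g' = 1 + ε g²` with `ε = ±1`, as for `g = tanh` (`ε = -1`) and `g = tan` (`ε = 1`), `g² + ε` is a
model solution.
-/

/-- Solution family (a): `h(y) = 1/(T₁ (y+h₀)²)`. -/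
noncomputable def hSolA (T1 h0 : ℝ) : ℝ → ℝ := fun y => 1 / (T1 * (y + h0) ^ 2)

/-- Solution family (b): `h(y) = h₁ (tanh²(√h₁ (y+h₀)) - 1)/T₁`. -/
noncomputable def hSolB (T1 h1 h0 : ℝ) : ℝ → ℝ :=
  fun y => h1 * ((Real.tanh (Real.sqrt h1 * (y + h0))) ^ 2 - 1) / T1

/-- Solution family (c): `h(y) = h₁ (tan²(√h₁ (y+h₀)) + 1)/T₁`. -/
noncomputable def hSolC (T1 h1 h0 : ℝ) : ℝ → ℝ :=
  fun y => h1 * ((Real.tan (Real.sqrt h1 * (y + h0))) ^ 2 + 1) / T1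

open Filter Topology

def SolvesBertottiRobinsonAt (T : ℝ) (h : ℝ → ℝ) (y : ℝ) : Prop :=
  h y * deriv (deriv h) y - deriv h y ^ 2 = 2 * T * h y ^ 3

-- Holds pointwise without differentiability: `deriv` commutes with affine reparametrisation.
theorem deriv_const_mul_comp_mul_add (u : ℝ → ℝ) (k c d : ℝ) :
    deriv (fun y => k * u (c * (y + d))) = fun y => k * c * deriv u (c * (y + d)) := by
  funext y
  rw [deriv_const_mul_field']
  simp only
  rw [deriv_comp_add_const (f := fun z => u (c * z)) d y, deriv_comp_mul_left, smul_eq_mul,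
    mul_assoc]

theorem SolvesBertottiRobinsonAt.const_mul_comp_mul_add {u : ℝ → ℝ} {T k c d y : ℝ}
    (hu : SolvesBertottiRobinsonAt 1 u (c * (y + d))) (hkc : T * k = c ^ 2) :
    SolvesBertottiRobinsonAt T (fun y => k * u (c * (y + d))) y := by
  unfold SolvesBertottiRobinsonAt at hu ⊢
  rw [deriv_const_mul_comp_mul_add, deriv_const_mul_comp_mul_add]
  linear_combination (k ^ 2 * c ^ 2) * hu - 2 * k ^ 2 * u (c * (y + d)) ^ 3 * hkc

theorem solvesBertottiRobinsonAt_zpow_neg_two {x : ℝ} (hx : x ≠ 0) :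
    SolvesBertottiRobinsonAt 1 (fun x => x ^ (-2 : ℤ)) x := by
  unfold SolvesBertottiRobinsonAt
  simp only [deriv_zpow', deriv_const_mul_field', deriv_zpow]
  norm_num
  field_simp
  ring

theorem solvesBertottiRobinsonAt_sq_add_of_riccati {g : ℝ → ℝ} {ε x : ℝ} (hε : ε = 1 ∨ ε = -1)
    (hg : ∀ᶠ z in 𝓝 x, HasDerivAt g (1 + ε * g z ^ 2) z) :
    SolvesBertottiRobinsonAt 1 (fun z => g z ^ 2 + ε) x := by
  have hu' : deriv (fun z => g z ^ 2 + ε) =ᶠ[𝓝 x] fun z => 2 * g z * (1 + ε * g z ^ 2) :=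
    hg.mono fun z hz => by
      refine ((hz.fun_pow 2).add_const ε).deriv.trans ?_
      ring
  have hgx := hg.self_of_nhds
  have hu'' : deriv (deriv fun z => g z ^ 2 + ε) x
      = 2 * (1 + ε * g x ^ 2) ^ 2 + 4 * ε * g x ^ 2 * (1 + ε * g x ^ 2) := by
    rw [hu'.deriv_eq]
    refine ((hgx.const_mul 2).mul (((hgx.fun_pow 2).const_mul ε).const_add 1)).deriv.trans ?_
    ring
  unfold SolvesBertottiRobinsonAt
  rw [hu'', hu'.self_of_nhds]
  rcases hε with rfl | rfl <;> ring

theorem Real.hasDerivAt_tanh (x : ℝ) : HasDerivAt tanh (1 - tanh x ^ 2) x := by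
  have hcosh : cosh x ≠ 0 := (cosh_pos x).ne'
  have h := (hasDerivAt_sinh x).div (hasDerivAt_cosh x) hcosh
  rw [show sinh / cosh = tanh from funext fun y => (tanh_eq_sinh_div_cosh y).symm] at h
  refine h.congr_deriv ?_
  rw [tanh_eq_sinh_div_cosh]
  field_simp

theorem Real.hasDerivAt_tan_eq_one_add_tan_sq {x : ℝ} (hx : cos x ≠ 0) :
    HasDerivAt tan (1 + tan x ^ 2) x := by
  rw [← inv_inv (1 + tan x ^ 2), inv_one_add_tan_sq hx, ← one_div]
  exact hasDerivAt_tan hx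

theorem solvesBertottiRobinsonAt_tanh_sq_sub_one (x : ℝ) :
    SolvesBertottiRobinsonAt 1 (fun z => Real.tanh z ^ 2 - 1) x := by
  simpa only [← sub_eq_add_neg] using solvesBertottiRobinsonAt_sq_add_of_riccati (Or.inr rfl)
    (.of_forall fun z => (Real.hasDerivAt_tanh z).congr_deriv (by ring))

theorem solvesBertottiRobinsonAt_tan_sq_add_one {x : ℝ} (hx : Real.cos x ≠ 0) :
    SolvesBertottiRobinsonAt 1 (fun z => Real.tan z ^ 2 + 1) x :=
  solvesBertottiRobinsonAt_sq_add_of_riccati (Or.inl rfl) <|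
    (Real.continuous_cos.continuousAt.eventually_ne hx).mono fun z hz =>
      (Real.hasDerivAt_tan_eq_one_add_tan_sq hz).congr_deriv (by ring)

theorem hSolA_eq (T1 h0 : ℝ) : hSolA T1 h0 = fun y => T1⁻¹ * (1 * (y + h0)) ^ (-2 : ℤ) := by
  funext y
  simp [hSolA, mul_comm]

theorem hSolB_eq (T1 h1 h0 : ℝ) :
    hSolB T1 h1 h0 = fun y => h1 / T1 * (Real.tanh (Real.sqrt h1 * (y + h0)) ^ 2 - 1) := by
  funext y
  simp only [hSolB]
  ring

theorem hSolC_eq (T1 h1 h0 : ℝ) :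
    hSolC T1 h1 h0 = fun y => h1 / T1 * (Real.tan (Real.sqrt h1 * (y + h0)) ^ 2 + 1) := by
  funext y
  simp only [hSolC]
  ring

/-- The three families of conformal factors solve the Bertotti--Robinson
equation `h h'' - (h')² = 2 T₁ h³` wherever they are defined. -/
theorem bertotti_robinson_solutions
    (T1 h1 h0 : ℝ) (hT1 : 0 < T1) (hh1 : 0 < h1) :
    (∀ y : ℝ, y ≠ -h0 →
      hSolA T1 h0 y * deriv (deriv (hSolA T1 h0)) y - (deriv (hSolA T1 h0) y) ^ 2
        = 2 * T1 * (hSolA T1 h0 y) ^ 3) ∧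
    (∀ y : ℝ, hSolB T1 h1 h0 y ≠ 0 →
      hSolB T1 h1 h0 y * deriv (deriv (hSolB T1 h1 h0)) y - (deriv (hSolB T1 h1 h0) y) ^ 2
        = 2 * T1 * (hSolB T1 h1 h0 y) ^ 3) ∧
    (∀ y : ℝ, (∀ k : ℤ, Real.sqrt h1 * (y + h0) ≠ (2 * k + 1) * (Real.pi / 2)) →
      hSolC T1 h1 h0 y * deriv (deriv (hSolC T1 h1 h0)) y - (deriv (hSolC T1 h1 h0) y) ^ 2
        = 2 * T1 * (hSolC T1 h1 h0 y) ^ 3) := by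
  have hscale : T1 * (h1 / T1) = Real.sqrt h1 ^ 2 := by
    rw [Real.sq_sqrt hh1.le]
    field_simp
  refine ⟨fun y hy => ?_, fun y _ => ?_, fun y hy => ?_⟩
  · rw [hSolA_eq]
    have hy' : 1 * (y + h0) ≠ 0 := by rwa [one_mul, Ne, add_eq_zero_iff_eq_neg]
    exact (solvesBertottiRobinsonAt_zpow_neg_two hy').const_mul_comp_mul_add (by field_simp)
  · rw [hSolB_eq]
    exact (solvesBertottiRobinsonAt_tanh_sq_sub_one _).const_mul_comp_mul_add hscale
  · rw [hSolC_eq]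
    have hcos : Real.cos (Real.sqrt h1 * (y + h0)) ≠ 0 :=
      Real.cos_ne_zero_iff.mpr fun k => by simpa only [mul_div_assoc] using hy k
    exact (solvesBertottiRobinsonAt_tan_sq_add_one hcos).const_mul_comp_mul_add hscale
end

section
/- Let $e, p, T_0, T_1, L, L_S, L_P \in \mathbb{R}$, and set $S = p^2 T_0^2 - e^2 T_1^2$ and $P = 2 e p T_0 T_1$. Suppose the Bertotti--Robinson constraint system holds: $T_0 = -2L - 4 e^2 T_1^2 L_S + 2 P L_P$ and $T_1 = 2L - 4 p^2 T_0^2 L_S - 2 P L_P$. If additionally the trace-free (conformal invariance) condition $L = S L_S + P L_P$ holds, then $T_0 = T_1$. -/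
/-- Algebraic core of Theorem 2: for a conformally invariant NLE (Euler relation
`L = S·L_S + P·L_P`) the Bertotti--Robinson constraints force `T₀ = T₁`. -/
theorem conformal_NLE_equal_radii
    (e p T0 T1 L LS LP S P : ℝ)
    (hS : S = p ^ 2 * T0 ^ 2 - e ^ 2 * T1 ^ 2)
    (hP : P = 2 * e * p * T0 * T1)
    (hc1 : T0 = -2 * L - 4 * e ^ 2 * T1 ^ 2 * LS + 2 * P * LP)
    (hc2 : T1 = 2 * L - 4 * p ^ 2 * T0 ^ 2 * LS - 2 * P * LP)
    (heuler : L = S * LS + P * LP) :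
    T0 = T1 := by
  subst hS hP
  linear_combination hc1 - hc2 - 4 * heuler
end

section
/- Let $\gamma \geq 0$ and $e, p \in \mathbb{R}$ with $(e,p) \neq (0,0)$, and set $T = \frac{e^{\gamma}}{e^2 + p^2 e^{2\gamma}}$, $S = (p^2 - e^2) T^2$, $P = 2 e p T^2$. Let $L = -\frac{1}{2}(S\cosh\gamma + \sinh\gamma\sqrt{S^2+P^2})$, $L_S = -\frac{1}{2}\left(\cosh\gamma + \sinh\gamma\,\frac{p^2-e^2}{p^2+e^2}\right)$, and $L_P = -\sinh\gamma\,\frac{e p}{p^2+e^2}$ (these are the ModMax Lagrangian and its partial derivatives $\partial_S L$, $\partial_P L$ evaluated at $(S,P)$). Then both Bertotti--Robinson constraint equations hold with $T_0 = T_1 = T$: $T = -2L - 4 e^2 T^2 L_S + 2 P L_P$ and $T = 2L - 4 p^2 T^2 L_S - 2 P L_P$. -/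
/-!
With `q = e² + p²`, the point `(S, P) = T² (p² - e², 2ep)` lies on a circle of radius `q T²`, so the
square root in the ModMax Lagrangian is `q T²`. Substituting, both constraint right-hand sides collapse
to `T² (q cosh γ + (p² - e²) sinh γ) = T² (e² e^{-γ} + p² e^{γ})`, which is `T` exactly for the
stated value of `T`.
-/

open Real

lemma sq_add_sq_mul_pos {e p k : ℝ} (hep : (e, p) ≠ (0, 0)) (hk : 0 < k) :
    0 < e ^ 2 + p ^ 2 * k := by
  obtain he | hp : e ≠ 0 ∨ p ≠ 0 := by
    rw [Ne, Prod.mk.injEq, not_and_or] at hep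
    exact hep
  · positivity
  · positivity

lemma sqrt_sq_sub_sq_mul_add_two_mul_mul_sq {e p t : ℝ} (ht : 0 ≤ t) :
    √(((p ^ 2 - e ^ 2) * t) ^ 2 + (2 * e * p * t) ^ 2) = (p ^ 2 + e ^ 2) * t := by
  rw [show ((p ^ 2 - e ^ 2) * t) ^ 2 + (2 * e * p * t) ^ 2 = ((p ^ 2 + e ^ 2) * t) ^ 2 by ring]
  exact sqrt_sq (by positivity)

lemma add_mul_cosh_add_sub_mul_sinh (x y γ : ℝ) :
    (x + y) * cosh γ + (y - x) * sinh γ = x * exp (-γ) + y * exp γ := by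
  rw [cosh_eq, sinh_eq]
  ring

lemma sq_mul_sq_mul_exp_neg_add_sq_mul_exp {e p γ : ℝ} (hD : e ^ 2 + p ^ 2 * exp (2 * γ) ≠ 0) :
    (exp γ / (e ^ 2 + p ^ 2 * exp (2 * γ))) ^ 2 * (e ^ 2 * exp (-γ) + p ^ 2 * exp γ) =
      exp γ / (e ^ 2 + p ^ 2 * exp (2 * γ)) := by
  have h2 : exp (2 * γ) = exp γ ^ 2 := by rw [two_mul, exp_add, sq]
  have hD' : e ^ 2 + p ^ 2 * exp γ ^ 2 ≠ 0 := h2 ▸ hD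
  rw [exp_neg, h2]
  field_simp

theorem modMax_bertotti_robinson_row_general
    (γ e p : ℝ) (hep : (e, p) ≠ (0, 0))
    (T S P L LS LP : ℝ)
    (hT : T = Real.exp γ / (e ^ 2 + p ^ 2 * Real.exp (2 * γ)))
    (hS : S = (p ^ 2 - e ^ 2) * T ^ 2)
    (hP : P = 2 * e * p * T ^ 2)
    (hL : L = -(1 / 2) * (S * Real.cosh γ + Real.sinh γ * Real.sqrt (S ^ 2 + P ^ 2)))
    (hLS : LS = -(1 / 2) * (Real.cosh γ + Real.sinh γ * ((p ^ 2 - e ^ 2) / (p ^ 2 + e ^ 2))))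
    (hLP : LP = -Real.sinh γ * (e * p / (p ^ 2 + e ^ 2))) :
    T = -2 * L - 4 * e ^ 2 * T ^ 2 * LS + 2 * P * LP ∧
    T = 2 * L - 4 * p ^ 2 * T ^ 2 * LS - 2 * P * LP := by
  have hq : p ^ 2 + e ^ 2 ≠ 0 := by
    simpa [add_comm] using (sq_add_sq_mul_pos hep one_pos).ne'
  have hT_fixed : T ^ 2 * ((e ^ 2 + p ^ 2) * cosh γ + (p ^ 2 - e ^ 2) * sinh γ) = T := by
    rw [add_mul_cosh_add_sub_mul_sinh, hT]
    exact sq_mul_sq_mul_exp_neg_add_sq_mul_exp (sq_add_sq_mul_pos hep (exp_pos _)).ne'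
  have hroot : √(S ^ 2 + P ^ 2) = (p ^ 2 + e ^ 2) * T ^ 2 := by
    rw [hS, hP]
    exact sqrt_sq_sub_sq_mul_add_two_mul_mul_sq (sq_nonneg T)
  rw [hroot] at hL
  subst hL hLS hLP hS hP
  constructor
  all_goals
    conv_lhs => rw [← hT_fixed]
    field_simp
    ring

/-- Verification of the ModMax row of Table I: `T₀ = T₁ = e^γ/(e² + p² e^{2γ})`
solves both Bertotti--Robinson constraint equations. -/
theorem modMax_bertotti_robinson_row
    (γ e p : ℝ) (hγ : 0 ≤ γ) (hep : (e, p) ≠ (0, 0))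
    (T S P L LS LP : ℝ)
    (hT : T = Real.exp γ / (e ^ 2 + p ^ 2 * Real.exp (2 * γ)))
    (hS : S = (p ^ 2 - e ^ 2) * T ^ 2)
    (hP : P = 2 * e * p * T ^ 2)
    (hL : L = -(1 / 2) * (S * Real.cosh γ + Real.sinh γ * Real.sqrt (S ^ 2 + P ^ 2)))
    (hLS : LS = -(1 / 2) * (Real.cosh γ + Real.sinh γ * ((p ^ 2 - e ^ 2) / (p ^ 2 + e ^ 2))))
    (hLP : LP = -Real.sinh γ * (e * p / (p ^ 2 + e ^ 2))) :
    T = -2 * L - 4 * e ^ 2 * T ^ 2 * LS + 2 * P * LP ∧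
    T = 2 * L - 4 * p ^ 2 * T ^ 2 * LS - 2 * P * LP :=
  modMax_bertotti_robinson_row_general γ e p hep T S P L LS LP hT hS hP hL hLS hLP
end

section
/- Let $b > 0$, $Q > 0$, $M \in \mathbb{R}$, and define $f : (0,\infty) \to \mathbb{R}$ by $f(r) = 1 - \frac{2M}{r} + \frac{2b^2}{3} r^2 - \frac{2b^2}{r} \int_0^r \sqrt{s^4 + Q^2/b^2}\, ds$. If $R_0 > 0$ satisfies $f(R_0) = 0$ and $f'(R_0) = 0$, then $4 Q^2 b^2 > 1$, $R_0 = \frac{\sqrt{4 Q^2 b^2 - 1}}{2 b}$, and $\frac{1}{2} f''(R_0) = \frac{4 b^2}{4 Q^2 b^2 + 1}$. -/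
/-!
Write `f r = m r / r`, where `m r = r f r = r - 2M + (2b²/3) r³ - 2b² ∫₀ʳ √(s⁴ + Q²/b²) ds`.
A double root of `f` at `R₀ ≠ 0` is a double root of `m`, and there `f''(R₀) = m''(R₀)/R₀`.
Since `m'(r) = 1 + 2b²r² - 2b²√(r⁴ + Q²/b²)`, the condition `m'(R₀) = 0` squares to
`4b²R₀² + 1 = 4Q²b²`, which is the charge gap and determines `R₀`; substituting
`√(R₀⁴ + Q²/b²) = (1 + 2b²R₀²)/(2b²)` into `m''(R₀)/R₀` gives `T₁`.
-/

open Filter Topology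

section DivId

variable {f m : ℝ → ℝ} {x : ℝ}

theorem double_root_of_eventuallyEq_div_id (hf : f =ᶠ[𝓝 x] fun r => m r / r)
    (hm : DifferentiableAt ℝ m x) (hx : x ≠ 0) (h0 : f x = 0) (h1 : deriv f x = 0) :
    m x = 0 ∧ deriv m x = 0 := by
  have hm0 : m x = 0 := by
    rw [hf.eq_of_nhds, div_eq_zero_iff] at h0
    exact h0.resolve_right hx
  refine ⟨hm0, ?_⟩
  rw [hf.deriv_eq, (hm.hasDerivAt.fun_div (hasDerivAt_id' x) hx).deriv] at h1
  simpa [hm0, hx] using h1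

theorem deriv_deriv_eq_of_eventuallyEq_div_id {m'' : ℝ} (hf : f =ᶠ[𝓝 x] fun r => m r / r)
    (hm : ∀ᶠ r in 𝓝 x, DifferentiableAt ℝ m r) (hm' : HasDerivAt (deriv m) m'' x)
    (hx : x ≠ 0) (h0 : m x = 0) (h1 : deriv m x = 0) : deriv (deriv f) x = m'' / x := by
  have hderiv : deriv f =ᶠ[𝓝 x] fun r => (deriv m r * r - m r) / r ^ 2 := by
    filter_upwards [hf.deriv, hm, eventually_ne_nhds hx] with r hfr hmr hr
    rw [hfr, (hmr.hasDerivAt.fun_div (hasDerivAt_id' r) hr).deriv]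
    simp
  have hquot := ((hm'.fun_mul (hasDerivAt_id' x)).fun_sub hm.self_of_nhds.hasDerivAt).fun_div
    ((hasDerivAt_id' x).fun_pow 2) (pow_ne_zero 2 hx)
  rw [hderiv.deriv_eq, hquot.deriv, h0, h1]
  field_simp
  ring

end DivId

theorem hasDerivAt_sqrt_pow_four_add {c x : ℝ} (hx : x ^ 4 + c ≠ 0) :
    HasDerivAt (fun s => √(s ^ 4 + c)) (2 * x ^ 3 / √(x ^ 4 + c)) x := by
  convert ((hasDerivAt_pow 4 x).add_const c).sqrt hx using 1
  field_simp
  norm_num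

namespace BornInfeld

variable (b Q M : ℝ)

noncomputable def metricFunction : ℝ → ℝ := fun r => 1 - 2 * M / r + 2 * b ^ 2 / 3 * r ^ 2
  - 2 * b ^ 2 / r * ∫ s in (0:ℝ)..r, Real.sqrt (s ^ 4 + Q ^ 2 / b ^ 2)

noncomputable def metricNumerator (r : ℝ) : ℝ :=
  r - 2 * M + 2 * b ^ 2 / 3 * r ^ 3 - 2 * b ^ 2 * ∫ s in (0:ℝ)..r, √(s ^ 4 + Q ^ 2 / b ^ 2)

theorem metricFunction_eventuallyEq_metricNumerator_div {x : ℝ} (hx : x ≠ 0) :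
    metricFunction b Q M =ᶠ[𝓝 x] fun r => metricNumerator b Q M r / r := by
  filter_upwards [eventually_ne_nhds hx] with r hr
  simp only [metricFunction, metricNumerator]
  field_simp

theorem hasDerivAt_metricNumerator (r : ℝ) :
    HasDerivAt (metricNumerator b Q M)
      (1 + 2 * b ^ 2 * r ^ 2 - 2 * b ^ 2 * √(r ^ 4 + Q ^ 2 / b ^ 2)) r := by
  have hint := ((show Continuous fun s : ℝ => √(s ^ 4 + Q ^ 2 / b ^ 2) by fun_prop)
    |>.integral_hasStrictDerivAt 0 r).hasDerivAt
  refine ((((hasDerivAt_id' r).sub_const (2 * M)).fun_add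
    ((hasDerivAt_pow 3 r).const_mul (2 * b ^ 2 / 3))).fun_sub
    (hint.const_mul (2 * b ^ 2))).congr_deriv ?_
  norm_num
  ring

theorem deriv_metricNumerator :
    deriv (metricNumerator b Q M) =
      fun r => 1 + 2 * b ^ 2 * r ^ 2 - 2 * b ^ 2 * √(r ^ 4 + Q ^ 2 / b ^ 2) :=
  funext fun r => (hasDerivAt_metricNumerator b Q M r).deriv

theorem hasDerivAt_deriv_metricNumerator {x : ℝ} (hx : x ^ 4 + Q ^ 2 / b ^ 2 ≠ 0) :
    HasDerivAt (deriv (metricNumerator b Q M))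
      (4 * b ^ 2 * x - 4 * b ^ 2 * x ^ 3 / √(x ^ 4 + Q ^ 2 / b ^ 2)) x := by
  rw [deriv_metricNumerator]
  refine ((((hasDerivAt_pow 2 x).const_mul (2 * b ^ 2)).const_add 1).fun_sub
    ((hasDerivAt_sqrt_pow_four_add hx).const_mul (2 * b ^ 2))).congr_deriv ?_
  norm_num
  ring

variable {b Q}

theorem charge_gap_of_deriv_metricNumerator_eq_zero (hb : b ≠ 0) {R : ℝ}
    (h : 1 + 2 * b ^ 2 * R ^ 2 - 2 * b ^ 2 * √(R ^ 4 + Q ^ 2 / b ^ 2) = 0) :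
    4 * b ^ 2 * R ^ 2 + 1 = 4 * Q ^ 2 * b ^ 2 := by
  have hsq : √(R ^ 4 + Q ^ 2 / b ^ 2) ^ 2 = R ^ 4 + Q ^ 2 / b ^ 2 :=
    Real.sq_sqrt (by positivity)
  have hsq' : b ^ 2 * √(R ^ 4 + Q ^ 2 / b ^ 2) ^ 2 = b ^ 2 * R ^ 4 + Q ^ 2 := by
    rw [hsq]
    field_simp
  linear_combination (1 + 2 * b ^ 2 * R ^ 2 + 2 * b ^ 2 * √(R ^ 4 + Q ^ 2 / b ^ 2)) * h
    + 4 * b ^ 2 * hsq'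

end BornInfeld

open BornInfeld in
theorem bornInfeld_extremal_horizon_general
    (b Q M R0 : ℝ) (hb : 0 < b) (hR0 : 0 < R0) (f : ℝ → ℝ)
    (hf : f = fun r => 1 - 2 * M / r + 2 * b ^ 2 / 3 * r ^ 2
      - 2 * b ^ 2 / r * ∫ s in (0:ℝ)..r, Real.sqrt (s ^ 4 + Q ^ 2 / b ^ 2))
    (hroot : f R0 = 0) (hroot' : deriv f R0 = 0) :
    4 * Q ^ 2 * b ^ 2 > 1 ∧
    R0 = Real.sqrt (4 * Q ^ 2 * b ^ 2 - 1) / (2 * b) ∧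
    (1 / 2) * deriv (deriv f) R0 = 4 * b ^ 2 / (4 * Q ^ 2 * b ^ 2 + 1) := by
  obtain rfl : f = metricFunction b Q M := hf
  have hev := metricFunction_eventuallyEq_metricNumerator_div b Q M hR0.ne'
  have hdiff : ∀ r, DifferentiableAt ℝ (metricNumerator b Q M) r :=
    fun r => (hasDerivAt_metricNumerator b Q M r).differentiableAt
  obtain ⟨h0, h1⟩ := double_root_of_eventuallyEq_div_id hev (hdiff R0) hR0.ne' hroot hroot'
  have hf'' := deriv_deriv_eq_of_eventuallyEq_div_id hev (.of_forall hdiff)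
    (hasDerivAt_deriv_metricNumerator b Q M (by positivity)) hR0.ne' h0 h1
  rw [deriv_metricNumerator] at h1
  have hgap := charge_gap_of_deriv_metricNumerator_eq_zero hb.ne' h1
  refine ⟨by nlinarith [mul_pos (mul_pos hb hb) (mul_pos hR0 hR0)], ?_, ?_⟩
  · rw [← hgap, show 4 * b ^ 2 * R0 ^ 2 + 1 - 1 = (2 * b * R0) ^ 2 by ring,
      Real.sqrt_sq (by positivity)]
    field_simp
  · have hsqrt : √(R0 ^ 4 + Q ^ 2 / b ^ 2) = (1 + 2 * b ^ 2 * R0 ^ 2) / (2 * b ^ 2) := by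
      rw [eq_div_iff (by positivity)]
      linarith
    rw [hf'', hsqrt, ← hgap]
    field_simp
    ring

/-- Extremal Born--Infeld black holes: a double root `R₀ > 0` of the
Born--Infeld metric function exists only above the charge gap `4Q²b² > 1`,
with `R₀ = √(4Q²b²-1)/(2b)` and `½ f''(R₀) = 4b²/(4Q²b²+1)`. -/
theorem bornInfeld_extremal_horizon
    (b Q M R0 : ℝ) (hb : 0 < b) (hQ : 0 < Q) (hR0 : 0 < R0) (f : ℝ → ℝ)
    (hf : f = fun r => 1 - 2 * M / r + 2 * b ^ 2 / 3 * r ^ 2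
      - 2 * b ^ 2 / r * ∫ s in (0:ℝ)..r, Real.sqrt (s ^ 4 + Q ^ 2 / b ^ 2))
    (hroot : f R0 = 0) (hroot' : deriv f R0 = 0) :
    4 * Q ^ 2 * b ^ 2 > 1 ∧
    R0 = Real.sqrt (4 * Q ^ 2 * b ^ 2 - 1) / (2 * b) ∧
    (1 / 2) * deriv (deriv f) R0 = 4 * b ^ 2 / (4 * Q ^ 2 * b ^ 2 + 1) :=
  bornInfeld_extremal_horizon_general b Q M R0 hb hR0 f hf hroot hroot'
end

section
/- Let $\alpha > 0$, $Q > 0$, $M \in \mathbb{R}$, and define $f : (0,\infty) \to \mathbb{R}$ by $f(r) = 1 - 2\alpha^2 Q + \frac{4 \alpha Q^{3/2}}{3 r} - \frac{2M}{r} + 4 r \alpha^3 \sqrt{Q} - 4 \alpha^4 r^2 \log\left(1 + \frac{\sqrt{Q}}{r \alpha}\right)$. If $R_0 > 0$ satisfies $f(R_0) = 0$ and $f'(R_0) = 0$, then $\frac{1}{2} f''(R_0) = \frac{2 \alpha^2 Q^2 - (R_0 \alpha + \sqrt{Q})^2}{R_0^2 (R_0 \alpha + \sqrt{Q})^2}$.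 Moreover, if in addition $f''(R_0) > 0$, then $Q > \frac{1}{2 \alpha^2}$. -/
/-!
The operator `f ↦ f'' - 2 f / r²` annihilates both `1 / r` and `r²`, so it kills the mass
term and turns `r² log (1 + √Q / (r α))` into a rational function. Hence at a root `R₀` of `f`
the value `f''(R₀)` is an explicit rational function of `R₀`, free of `M` and of the logarithm.
Its positivity gives `2 α² Q² > (R₀ α + √Q)² > Q`, i.e. `Q > 1 / (2 α²)`.
-/

open Real

noncomputable section

namespace RegMax

def metric (α Q M r : ℝ) : ℝ :=
  1 - 2 * α ^ 2 * Q + 4 * α * (Q * √Q) / (3 * r) - 2 * M / r + 4 * r * α ^ 3 * √Q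
    - 4 * α ^ 4 * r ^ 2 * log (1 + √Q / (r * α))

def metricDeriv (α Q M r : ℝ) : ℝ :=
  -(4 * α * (Q * √Q)) / (3 * r ^ 2) + 2 * M / r ^ 2 + 4 * α ^ 3 * √Q
    - 8 * α ^ 4 * r * log (1 + √Q / (r * α)) + 4 * α ^ 4 * r * √Q / (r * α + √Q)

def metricDeriv2 (α Q M r : ℝ) : ℝ :=
  8 * α * (Q * √Q) / (3 * r ^ 3) - 4 * M / r ^ 3 - 8 * α ^ 4 * log (1 + √Q / (r * α))
    + 8 * α ^ 4 * √Q / (r * α + √Q) + 4 * α ^ 4 * √Q ^ 2 / (r * α + √Q) ^ 2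

variable {α Q M r : ℝ}

theorem hasDerivAt_log_one_add_div (hα : 0 < α) (hr : 0 < r) :
    HasDerivAt (fun x => log (1 + √Q / (x * α))) (-√Q / (r * (r * α + √Q))) r := by
  have hinner : HasDerivAt (fun x => 1 + √Q / α * x⁻¹) (√Q / α * -(r ^ 2)⁻¹) r :=
    ((hasDerivAt_inv hr.ne').const_mul _).const_add 1
  have hpos : 0 < 1 + √Q / α * r⁻¹ := by positivity
  convert hinner.log hpos.ne' using 1
  · funext x; ring_nf
  · field_simp [hpos.ne']

theorem hasDerivAt_metric (hα : 0 < α) (hr : 0 < r) :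
    HasDerivAt (metric α Q M) (metricDeriv α Q M r) r := by
  have hlog := hasDerivAt_log_one_add_div (Q := Q) hα hr
  have hinv := hasDerivAt_inv hr.ne'
  have h := ((((hinv.const_mul (4 * α * (Q * √Q) / 3)).sub (hinv.const_mul (2 * M))).add
    ((hasDerivAt_id r).const_mul (4 * α ^ 3 * √Q))).sub
    (((hasDerivAt_pow 2 r).mul hlog).const_mul (4 * α ^ 4))).const_add (1 - 2 * α ^ 2 * Q)
  refine (h.congr_of_eventuallyEq (.of_forall fun x => ?_)).congr_deriv ?_
  · simp only [metric, Pi.add_apply, Pi.sub_apply, Pi.mul_apply, id]; ring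
  · have hA : α * r + √Q ≠ 0 := by positivity
    simp only [metricDeriv]
    field_simp
    ring

theorem hasDerivAt_metricDeriv (hα : 0 < α) (hr : 0 < r) :
    HasDerivAt (metricDeriv α Q M) (metricDeriv2 α Q M r) r := by
  have hlog := hasDerivAt_log_one_add_div (Q := Q) hα hr
  have hinv := (hasDerivAt_pow 2 r).inv (pow_ne_zero 2 hr.ne')
  have hA : r * α + √Q ≠ 0 := by positivity
  have hfrac := ((hasDerivAt_id r).const_mul (4 * α ^ 4 * √Q)).div
    (((hasDerivAt_id r).mul_const α).add_const √Q) hA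
  have h := ((((hinv.const_mul (2 * M - 4 * α * (Q * √Q) / 3)).sub
    (((hasDerivAt_id r).mul hlog).const_mul (8 * α ^ 4))).add hfrac)).add_const (4 * α ^ 3 * √Q)
  refine (h.congr_of_eventuallyEq (.of_forall fun x => ?_)).congr_deriv ?_
  · simp only [metricDeriv, Pi.add_apply, Pi.sub_apply, Pi.mul_apply, Pi.div_apply,
      Pi.inv_apply, id]
    ring
  · have hA' : α * r + √Q ≠ 0 := by positivity
    simp only [metricDeriv2, id]
    field_simp
    ring

theorem deriv_deriv_metric (hα : 0 < α) (hr : 0 < r) :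
    deriv (deriv (metric α Q M)) r = metricDeriv2 α Q M r := by
  have hderiv : deriv (metric α Q M) =ᶠ[nhds r] metricDeriv α Q M :=
    Filter.eventually_of_mem (isOpen_Ioi.mem_nhds hr) fun x hx =>
      (hasDerivAt_metric hα hx).deriv
  rw [hderiv.deriv_eq, (hasDerivAt_metricDeriv hα hr).deriv]

theorem metricDeriv2_sub_metric (hα : 0 < α) (hQ : 0 ≤ Q) (hr : 0 < r) :
    metricDeriv2 α Q M r - 2 * metric α Q M r / r ^ 2
      = 2 * ((2 * α ^ 2 * Q ^ 2 - (r * α + √Q) ^ 2) / (r ^ 2 * (r * α + √Q) ^ 2)) := by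
  have hA : α * r + √Q ≠ 0 := by positivity
  have hsq := sq_sqrt hQ
  rw [metricDeriv2, metric]
  generalize √Q = s at hA hsq ⊢
  subst hsq
  field_simp
  ring

theorem one_div_two_mul_sq_lt_of_add_sqrt_sq_lt (hα : 0 < α) (hQ : 0 ≤ Q) (hr : 0 < r)
    (h : (r * α + √Q) ^ 2 < 2 * α ^ 2 * Q ^ 2) :
    1 / (2 * α ^ 2) < Q := by
  have hQ_lt : Q < (r * α + √Q) ^ 2 := by
    nlinarith [sq_sqrt hQ, mul_pos hr hα, sqrt_nonneg Q]
  have hmul : Q * 1 < Q * (2 * α ^ 2 * Q) := by linarith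
  rw [div_lt_iff₀ (by positivity)]
  linarith [lt_of_mul_lt_mul_left hmul hQ]

end RegMax

end

open RegMax in
theorem regMax_extremal_horizon_general
    (α Q M R0 : ℝ) (hα : 0 < α) (hQ : 0 < Q) (hR0 : 0 < R0) (f : ℝ → ℝ)
    (hf : f = fun r => 1 - 2 * α ^ 2 * Q + 4 * α * (Q * Real.sqrt Q) / (3 * r)
      - 2 * M / r + 4 * r * α ^ 3 * Real.sqrt Q
      - 4 * α ^ 4 * r ^ 2 * Real.log (1 + Real.sqrt Q / (r * α)))
    (hroot : f R0 = 0) :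
    (1 / 2) * deriv (deriv f) R0
      = (2 * α ^ 2 * Q ^ 2 - (R0 * α + Real.sqrt Q) ^ 2)
        / (R0 ^ 2 * (R0 * α + Real.sqrt Q) ^ 2) ∧
    (0 < deriv (deriv f) R0 → Q > 1 / (2 * α ^ 2)) := by
  replace hf : f = metric α Q M := hf
  subst hf
  have hsecond : (1 / 2) * deriv (deriv (metric α Q M)) R0
      = (2 * α ^ 2 * Q ^ 2 - (R0 * α + √Q) ^ 2) / (R0 ^ 2 * (R0 * α + √Q) ^ 2) := by
    have := metricDeriv2_sub_metric (M := M) hα hQ.le hR0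
    rw [hroot, mul_zero, zero_div, sub_zero] at this
    rw [deriv_deriv_metric hα hR0, this]
    ring
  refine ⟨hsecond, fun hpos => one_div_two_mul_sq_lt_of_add_sqrt_sq_lt hα hQ.le hR0 ?_⟩
  have hden : 0 < R0 ^ 2 * (R0 * α + √Q) ^ 2 := by positivity
  have := (div_pos_iff_of_pos_right hden).1 (by rw [← hsecond]; linarith)
  linarith

/-- Extremal RegMax black holes: at a double root `R₀` of the RegMax metric
function, `½ f''(R₀) = (2α²Q² - (R₀α+√Q)²)/(R₀²(R₀α+√Q)²)`; positivity of
`f''(R₀)` forces the charge gap `Q > 1/(2α²)`. -/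
theorem regMax_extremal_horizon
    (α Q M R0 : ℝ) (hα : 0 < α) (hQ : 0 < Q) (hR0 : 0 < R0) (f : ℝ → ℝ)
    (hf : f = fun r => 1 - 2 * α ^ 2 * Q + 4 * α * (Q * Real.sqrt Q) / (3 * r)
      - 2 * M / r + 4 * r * α ^ 3 * Real.sqrt Q
      - 4 * α ^ 4 * r ^ 2 * Real.log (1 + Real.sqrt Q / (r * α)))
    (hroot : f R0 = 0) (hroot' : deriv f R0 = 0) :
    (1 / 2) * deriv (deriv f) R0
      = (2 * α ^ 2 * Q ^ 2 - (R0 * α + Real.sqrt Q) ^ 2)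
        / (R0 ^ 2 * (R0 * α + Real.sqrt Q) ^ 2) ∧
    (0 < deriv (deriv f) R0 → Q > 1 / (2 * α ^ 2)) :=
  regMax_extremal_horizon_general α Q M R0 hα hQ hR0 f hf hroot
end

section
/- Let $\beta > 0$, $Q > 0$, $M \in \mathbb{R}$, and define $f : (0,\infty) \to \mathbb{R}$ by $f(r) = 1 - \frac{2 \beta^2 Q}{3} - \frac{2M}{r} + \frac{4 \beta Q^{3/2}}{3 r} \left(\frac{\pi}{2} - \arctan\frac{r \beta}{\sqrt{Q}}\right) + \frac{2 \beta^4 r^2}{3} \log\left(1 + \frac{Q}{\beta^2 r^2}\right)$. If $R_0 > 0$ satisfies $f(R_0) = 0$ and $f'(R_0) = 0$, then $\frac{1}{2} f''(R_0) = \frac{\beta^2 (2 Q^2 - R_0^2) - Q}{R_0^2 (R_0^2 \beta^2 + Q)}$. Moreover, if in addition $f''(R_0) > 0$, then $Q > \frac{1}{2 \beta^2}$. -/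
/-!
The operator `r² d²/dr² - 2` annihilates `1/r` and `r²`, and on `P(r)/r` and `r² L(r)` it only
involves `P'`, `P''`, `L'`, `L''`. In the Frolov--Hayward metric function the mass term is
`-2M/r`, the arccotangent term is of the form `P(r)/r` and the logarithmic term of the form
`r² L(r)`, where `P'` and `L'` are rational. Hence `r² f'' - 2 f` is the rational function
`2 (2β²Q² - Q - β²r²) / (Q + β²r²)`, which gives `f''(R₀)` at a zero `R₀` of `f`; its sign is that
of `β²(2Q² - R₀²) - Q < 2β²Q² - Q`.
-/

open Real

theorem hasDerivAt_pi_div_two_sub_arctan_mul_div (β s r : ℝ) (hs : s ≠ 0) :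
    HasDerivAt (fun r => π / 2 - arctan (r * β / s)) (-(β * s) / (s ^ 2 + β ^ 2 * r ^ 2)) r := by
  have h := ((hasDerivAt_mul_const (x := r) β).div_const s).arctan.const_sub (π / 2)
  refine h.congr_deriv ?_
  have : s ^ 2 + β ^ 2 * r ^ 2 ≠ 0 := by positivity
  field_simp

theorem hasDerivAt_log_one_add_div_sq (β s r : ℝ) (hβ : β ≠ 0) (hr : r ≠ 0) :
    HasDerivAt (fun r => log (1 + s ^ 2 / (β ^ 2 * r ^ 2)))
      (-2 * s ^ 2 / (r * (s ^ 2 + β ^ 2 * r ^ 2))) r := by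
  have hsq : HasDerivAt (fun r => s ^ 2 / (β ^ 2 * r ^ 2)) (-2 * s ^ 2 / (β ^ 2 * r ^ 3)) r := by
    refine ((hasDerivAt_const r (s ^ 2)).div ((hasDerivAt_pow 2 r).const_mul (β ^ 2))
      (by positivity)).congr_deriv ?_
    field_simp
    ring
  refine (hsq.const_add 1).log (by positivity) |>.congr_deriv ?_
  field_simp
  ring

-- `s` plays the role of `√Q`.
noncomputable def frolovHaywardMetric (β s M r : ℝ) : ℝ :=
  1 - 2 * β ^ 2 * s ^ 2 / 3 - 2 * M / r + 4 * β * s ^ 3 / (3 * r) * (π / 2 - arctan (r * β / s))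
    + 2 * β ^ 4 * r ^ 2 / 3 * log (1 + s ^ 2 / (β ^ 2 * r ^ 2))

noncomputable def frolovHaywardMetricDeriv (β s M r : ℝ) : ℝ :=
  2 * M / r ^ 2 - 4 * β * s ^ 3 / (3 * r ^ 2) * (π / 2 - arctan (r * β / s))
    + 4 * β ^ 4 * r / 3 * log (1 + s ^ 2 / (β ^ 2 * r ^ 2)) - 4 * β ^ 2 * s ^ 2 / (3 * r)

section

variable {β s : ℝ} (M : ℝ) {r : ℝ}

theorem hasDerivAt_frolovHaywardMetric (hβ : β ≠ 0) (hs : s ≠ 0) (hr : r ≠ 0) :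
    HasDerivAt (frolovHaywardMetric β s M) (frolovHaywardMetricDeriv β s M r) r := by
  have hA := hasDerivAt_pi_div_two_sub_arctan_mul_div β s r hs
  have hL := hasDerivAt_log_one_add_div_sq β s r hβ hr
  have h := ((((hasDerivAt_const r (2 * M)).div (hasDerivAt_id r) hr).const_sub
    (1 - 2 * β ^ 2 * s ^ 2 / 3)).add
    (((hasDerivAt_const r (4 * β * s ^ 3)).div ((hasDerivAt_id r).const_mul 3)
      (by simpa using hr)).mul hA)).add
    ((((hasDerivAt_pow 2 r).const_mul (2 * β ^ 4)).div_const 3).mul hL)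
  refine h.congr_deriv ?_
  have : s ^ 2 + β ^ 2 * r ^ 2 ≠ 0 := by positivity
  simp only [frolovHaywardMetricDeriv, id, Pi.div_apply]
  field_simp
  ring

theorem hasDerivAt_frolovHaywardMetricDeriv (hβ : β ≠ 0) (hs : s ≠ 0) (hr : r ≠ 0) :
    HasDerivAt (frolovHaywardMetricDeriv β s M)
      (-4 * M / r ^ 3 + 8 * β * s ^ 3 / (3 * r ^ 3) * (π / 2 - arctan (r * β / s))
        + 4 * β ^ 2 * s ^ 4 / (3 * r ^ 2 * (s ^ 2 + β ^ 2 * r ^ 2))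
        + 4 * β ^ 4 / 3 * log (1 + s ^ 2 / (β ^ 2 * r ^ 2))
        - 8 * β ^ 4 * s ^ 2 / (3 * (s ^ 2 + β ^ 2 * r ^ 2)) + 4 * β ^ 2 * s ^ 2 / (3 * r ^ 2)) r := by
  have hA := hasDerivAt_pi_div_two_sub_arctan_mul_div β s r hs
  have hL := hasDerivAt_log_one_add_div_sq β s r hβ hr
  have h := ((((hasDerivAt_const r (2 * M)).div (hasDerivAt_pow 2 r) (by positivity)).sub
    (((hasDerivAt_const r (4 * β * s ^ 3)).div ((hasDerivAt_pow 2 r).const_mul 3)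
      (by positivity)).mul hA)).add
    ((((hasDerivAt_id r).const_mul (4 * β ^ 4)).div_const 3).mul hL)).sub
    ((hasDerivAt_const r (4 * β ^ 2 * s ^ 2)).div ((hasDerivAt_id r).const_mul 3)
      (by simpa using hr))
  refine h.congr_deriv ?_
  have : s ^ 2 + β ^ 2 * r ^ 2 ≠ 0 := by positivity
  simp only [id, Pi.div_apply]
  field_simp
  ring

theorem sq_mul_deriv_deriv_frolovHaywardMetric (hβ : β ≠ 0) (hs : s ≠ 0) (hr : r ≠ 0) :
    r ^ 2 * deriv (deriv (frolovHaywardMetric β s M)) r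
      = 2 * frolovHaywardMetric β s M r
        + 2 * (2 * β ^ 2 * s ^ 4 - s ^ 2 - β ^ 2 * r ^ 2) / (s ^ 2 + β ^ 2 * r ^ 2) := by
  have hderiv : deriv (frolovHaywardMetric β s M) =ᶠ[nhds r] frolovHaywardMetricDeriv β s M :=
    (eventually_ne_nhds hr).mono fun x hx => (hasDerivAt_frolovHaywardMetric M hβ hs hx).deriv
  rw [hderiv.deriv_eq, (hasDerivAt_frolovHaywardMetricDeriv M hβ hs hr).deriv]
  have : s ^ 2 + β ^ 2 * r ^ 2 ≠ 0 := by positivity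
  unfold frolovHaywardMetric
  field_simp
  ring

end

theorem frolovHaywardMetric_sqrt (β M Q : ℝ) (hQ : 0 ≤ Q) :
    (fun r => 1 - 2 * β ^ 2 * Q / 3 - 2 * M / r
      + 4 * β * (Q * Real.sqrt Q) / (3 * r) * (Real.pi / 2 - Real.arctan (r * β / Real.sqrt Q))
      + 2 * β ^ 4 * r ^ 2 / 3 * Real.log (1 + Q / (β ^ 2 * r ^ 2)))
      = frolovHaywardMetric β (√Q) M := by
  have hs : √Q ^ 2 = Q := sq_sqrt hQ
  ext r
  rw [frolovHaywardMetric, hs, show √Q ^ 3 = Q * √Q by rw [pow_succ, hs]]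

theorem one_div_two_mul_sq_lt_of_pos (β Q R : ℝ) (hQ : 0 < Q)
    (h : 0 < β ^ 2 * (2 * Q ^ 2 - R ^ 2) - Q) : 1 / (2 * β ^ 2) < Q := by
  have hβ : 0 < β ^ 2 := by nlinarith [sq_nonneg β, sq_nonneg R]
  rw [div_lt_iff₀ (by positivity)]
  nlinarith [sq_nonneg (β * R)]

theorem frolovHayward_extremal_horizon_general
    (β Q M R0 : ℝ) (hβ : 0 < β) (hQ : 0 < Q) (hR0 : 0 < R0) (f : ℝ → ℝ)
    (hf : f = fun r => 1 - 2 * β ^ 2 * Q / 3 - 2 * M / r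
      + 4 * β * (Q * Real.sqrt Q) / (3 * r) * (Real.pi / 2 - Real.arctan (r * β / Real.sqrt Q))
      + 2 * β ^ 4 * r ^ 2 / 3 * Real.log (1 + Q / (β ^ 2 * r ^ 2)))
    (hroot : f R0 = 0) :
    (1 / 2) * deriv (deriv f) R0
      = (β ^ 2 * (2 * Q ^ 2 - R0 ^ 2) - Q) / (R0 ^ 2 * (R0 ^ 2 * β ^ 2 + Q)) ∧
    (0 < deriv (deriv f) R0 → Q > 1 / (2 * β ^ 2)) := by
  rw [frolovHaywardMetric_sqrt β M Q hQ.le] at hf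
  subst hf
  have key := sq_mul_deriv_deriv_frolovHaywardMetric M hβ.ne' (sqrt_pos.mpr hQ).ne' hR0.ne'
  rw [hroot, show √Q ^ 4 = (√Q ^ 2) ^ 2 by ring, sq_sqrt hQ.le] at key
  have hden : 0 < R0 ^ 2 * (Q + β ^ 2 * R0 ^ 2) := by positivity
  have hd2 : deriv (deriv (frolovHaywardMetric β √Q M)) R0
      = 2 * (2 * β ^ 2 * Q ^ 2 - Q - β ^ 2 * R0 ^ 2) / (R0 ^ 2 * (Q + β ^ 2 * R0 ^ 2)) := by
    rw [eq_div_iff hden.ne', ← mul_assoc, mul_comm _ (R0 ^ 2), key, mul_zero, zero_add,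
      div_mul_cancel₀ _ (by positivity)]
  refine ⟨by rw [hd2]; field_simp; ring, fun hpos => ?_⟩
  rw [hd2, div_pos_iff_of_pos_right hden] at hpos
  exact one_div_two_mul_sq_lt_of_pos β Q R0 hQ (by linarith)

/-- Extremal Frolov--Hayward black holes: at a double root `R₀` of the
Frolov--Hayward metric function, `½ f''(R₀) = (β²(2Q²-R₀²)-Q)/(R₀²(R₀²β²+Q))`;
positivity of `f''(R₀)` forces the charge gap `Q > 1/(2β²)`. -/
theorem frolovHayward_extremal_horizon
    (β Q M R0 : ℝ) (hβ : 0 < β) (hQ : 0 < Q) (hR0 : 0 < R0) (f : ℝ → ℝ)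
    (hf : f = fun r => 1 - 2 * β ^ 2 * Q / 3 - 2 * M / r
      + 4 * β * (Q * Real.sqrt Q) / (3 * r) * (Real.pi / 2 - Real.arctan (r * β / Real.sqrt Q))
      + 2 * β ^ 4 * r ^ 2 / 3 * Real.log (1 + Q / (β ^ 2 * r ^ 2)))
    (hroot : f R0 = 0) (hroot' : deriv f R0 = 0) :
    (1 / 2) * deriv (deriv f) R0
      = (β ^ 2 * (2 * Q ^ 2 - R0 ^ 2) - Q) / (R0 ^ 2 * (R0 ^ 2 * β ^ 2 + Q)) ∧
    (0 < deriv (deriv f) R0 → Q > 1 / (2 * β ^ 2)) :=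
  frolovHayward_extremal_horizon_general β Q M R0 hβ hQ hR0 f hf hroot
end

section
/- Let $b > 0$ and $Q > \frac{1}{2b}$, and set $x = \frac{4 Q^2 b^2 - 1}{4 Q^2 b^2 + 1}$. Then $0 < x < 1$, and for every integer $\ell \geq 1$ the exponent $\gamma_-(x,\ell) = -\frac{1}{2}\left(1 - \sqrt{1 + \frac{4 \ell(\ell+1)}{x}}\right)$ satisfies $\gamma_-(x,\ell) > 1$. -/
/-- Linear stability of extremal Born--Infeld black holes: for `Q > 1/(2b)`,
the near-horizon quantity `x = a₁R₀² = (4Q²b²-1)/(4Q²b²+1)` lies in `(0,1)`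
and the scalar exponent `γ₋(x,ℓ)` exceeds `1` for every `ℓ ≥ 1`. -/
theorem bornInfeld_extremal_stability
    (b Q : ℝ) (hb : 0 < b) (hQ : Q > 1 / (2 * b)) :
    0 < (4 * Q ^ 2 * b ^ 2 - 1) / (4 * Q ^ 2 * b ^ 2 + 1) ∧
    (4 * Q ^ 2 * b ^ 2 - 1) / (4 * Q ^ 2 * b ^ 2 + 1) < 1 ∧
    ∀ ℓ : ℕ, 1 ≤ ℓ →
      -(1 / 2) * (1 - Real.sqrt (1 + 4 * (ℓ : ℝ) * ((ℓ : ℝ) + 1)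
        / ((4 * Q ^ 2 * b ^ 2 - 1) / (4 * Q ^ 2 * b ^ 2 + 1)))) > 1 := by
  have hQ0 : 0 < Q := lt_trans (by positivity) hQ
  have h1 : 1 < 4 * Q ^ 2 * b ^ 2 := by
    have h : 1 / (2 * b) * (2 * b) < Q * (2 * b) :=
      mul_lt_mul_of_pos_right hQ (by positivity)
    rw [div_mul_cancel₀ _ (by positivity : (2 * b : ℝ) ≠ 0)] at h
    nlinarith
  set x : ℝ := (4 * Q ^ 2 * b ^ 2 - 1) / (4 * Q ^ 2 * b ^ 2 + 1) with hx
  have hden : (0:ℝ) < 4 * Q ^ 2 * b ^ 2 + 1 := by nlinarith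
  have hx0 : 0 < x := div_pos (by linarith) hden
  have hx1 : x < 1 := by
    rw [hx, div_lt_one hden]; linarith
  refine ⟨hx0, hx1, fun ℓ hℓ => ?_⟩
  have hℓ1 : (1:ℝ) ≤ (ℓ:ℝ) := by exact_mod_cast hℓ
  have key : 9 < 1 + 4 * (ℓ : ℝ) * ((ℓ : ℝ) + 1) / x := by
    have h8 : (8:ℝ) < 4 * (ℓ : ℝ) * ((ℓ : ℝ) + 1) / x := by
      rw [lt_div_iff₀ hx0]; nlinarith
    linarith
  have hs : 3 < Real.sqrt (1 + 4 * (ℓ : ℝ) * ((ℓ : ℝ) + 1) / x) := by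
    rw [show (3:ℝ) = Real.sqrt 9 by
      rw [show (9:ℝ) = 3 ^ 2 by norm_num, Real.sqrt_sq (by norm_num)]]
    exact Real.sqrt_lt_sqrt (by norm_num) key
  linarith
end

section
/- Let $\Lambda \in \mathbb{R}$ and $e \neq 0$ with $1 + 4 e^2 \Lambda > 0$. Define $T = \Lambda + \frac{1 + \sqrt{1 + 4 e^2 \Lambda}}{2 e^2}$ and $Q_e = \frac{T - \Lambda}{T + \Lambda}\, e$. Then: (i) $T + \Lambda > 0$ and $Q_e = \frac{e}{\sqrt{1 + 4 \Lambda e^2}}$, so $1 - 4 \Lambda Q_e^2 = \frac{1}{1 + 4 \Lambda e^2} > 0$; (ii) $T + \Lambda = \frac{1 + \sqrt{1 - 4 \Lambda Q_e^2}}{2 Q_e^2}$ and $T - \Lambda = \frac{\sqrt{1 - 4 \Lambda Q_e^2} + 1 - 4 \Lambda Q_e^2}{2 Q_e^2}$; (iii) if $\Lambda > 0$, then $|Q_e| < \frac{1}{2 \sqrt{\Lambda}}$ (the Nariai bound). -/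
/-!
Everything is rational in `e` and `s = √(1 + 4e²Λ)`: since `2Λ = (s² - 1)/(2e²)`, one gets
`T - Λ = (1 + s)/(2e²)` and `T + Λ = s(1 + s)/(2e²)`, hence `Qe = e/s` and `1 - 4ΛQe² = 1/s²`.
So `√(1 - 4ΛQe²) = 1/s`, which inverts the radii formulas, and the positivity of `1 - 4ΛQe²`
is the Nariai bound `4ΛQe² < 1`.
-/

lemma add_add_div_eq_of_sq_eq {Λ e s : ℝ} (he : e ≠ 0) (hs : s ^ 2 = 1 + 4 * e ^ 2 * Λ) :
    Λ + (1 + s) / (2 * e ^ 2) + Λ = s * (1 + s) / (2 * e ^ 2) := by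
  field_simp
  linear_combination -hs

lemma one_sub_four_mul_div_sq_of_sq_eq {Λ e s : ℝ} (hs₀ : s ≠ 0)
    (hs : s ^ 2 = 1 + 4 * e ^ 2 * Λ) :
    1 - 4 * Λ * (e / s) ^ 2 = 1 / s ^ 2 := by
  field_simp
  linear_combination hs

lemma abs_lt_one_div_two_sqrt_of_four_mul_sq_lt_one {Λ q : ℝ} (hΛ : 0 < Λ)
    (hq : 0 < 1 - 4 * Λ * q ^ 2) :
    |q| < 1 / (2 * Real.sqrt Λ) := by
  have hsqrt : 0 < Real.sqrt Λ := Real.sqrt_pos.mpr hΛ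
  rw [lt_div_iff₀ (by positivity)]
  have hsq : (|q| * (2 * Real.sqrt Λ)) ^ 2 < 1 := by
    rw [mul_pow, mul_pow, sq_abs, Real.sq_sqrt hΛ.le]
    linarith
  exact (sq_lt_one_iff₀ (by positivity)).mp hsq

/-- Maxwell--Λ Bertotti--Robinson solution (electric case `p = 0`):
the charge relation, the inverted radii formulas, and the Nariai bound. -/
theorem maxwell_lambda_bertotti_robinson
    (Λ e T Qe : ℝ) (he : e ≠ 0) (hpos : 1 + 4 * e ^ 2 * Λ > 0)
    (hT : T = Λ + (1 + Real.sqrt (1 + 4 * e ^ 2 * Λ)) / (2 * e ^ 2))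
    (hQe : Qe = (T - Λ) / (T + Λ) * e) :
    (T + Λ > 0 ∧ Qe = e / Real.sqrt (1 + 4 * Λ * e ^ 2) ∧
      1 - 4 * Λ * Qe ^ 2 = 1 / (1 + 4 * Λ * e ^ 2)) ∧
    (T + Λ = (1 + Real.sqrt (1 - 4 * Λ * Qe ^ 2)) / (2 * Qe ^ 2) ∧
      T - Λ = (Real.sqrt (1 - 4 * Λ * Qe ^ 2) + 1 - 4 * Λ * Qe ^ 2) / (2 * Qe ^ 2)) ∧
    (Λ > 0 → |Qe| < 1 / (2 * Real.sqrt Λ)) := by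
  rw [mul_right_comm 4 Λ (e ^ 2)]
  set s := Real.sqrt (1 + 4 * e ^ 2 * Λ)
  have hs_pos : 0 < s := Real.sqrt_pos.mpr hpos
  have hs : s ^ 2 = 1 + 4 * e ^ 2 * Λ := Real.sq_sqrt hpos.le
  have hTm : T - Λ = (1 + s) / (2 * e ^ 2) := by rw [hT]; ring
  have hTp : T + Λ = s * (1 + s) / (2 * e ^ 2) := hT ▸ add_add_div_eq_of_sq_eq he hs
  have hQ : Qe = e / s := by rw [hQe, hTm, hTp]; field_simp
  have harg : 1 - 4 * Λ * Qe ^ 2 = 1 / s ^ 2 :=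
    hQ ▸ one_sub_four_mul_div_sq_of_sq_eq hs_pos.ne' hs
  have hsqrt : Real.sqrt (1 - 4 * Λ * Qe ^ 2) = 1 / s := by
    rw [harg, one_div, Real.sqrt_inv, Real.sqrt_sq hs_pos.le, one_div]
  refine ⟨⟨by rw [hTp]; positivity, hQ, by rw [harg, hs]⟩, ⟨?_, ?_⟩, fun hΛ ↦
    abs_lt_one_div_two_sqrt_of_four_mul_sq_lt_one hΛ (by rw [harg]; positivity)⟩
  · rw [hTp, hsqrt, hQ]
    field_simp
    ring
  · rw [hTm, hsqrt, add_sub_assoc, harg, hQ]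
    field_simp
    ring
end

section
/- Let $\beta > 0$, $Q > 0$, $M \in \mathbb{R}$, and define $f : (0,\infty) \to \mathbb{R}$ by $f(r) = 1 - \frac{2 \beta^2 Q}{3} - \frac{2M}{r} + \frac{4 \beta Q^{3/2}}{3 r}\left(\frac{\pi}{2} - \arctan\frac{r \beta}{\sqrt{Q}}\right) + \frac{2 \beta^4 r^2}{3} \log\left(1 + \frac{Q}{\beta^2 r^2}\right)$, and set $U = \frac{\pi \beta Q^{3/2}}{3}$. Then $\lim_{r \to 0^+}\left(f(r) - \frac{2(U - M)}{r}\right) = 1 - 2 Q \beta^2$. -/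
/-!
Writing `π/2 - arctan` for the arccotangent, its constant part cancels the self-energy `U`
exactly, so `f r - 2(U - M)/r` is `1 - 2β²Q/3 - (4βQ^{3/2}/3) · arctan(rβ/√Q)/r` plus the
logarithmic term. The quotient tends to the slope `β/√Q` of `r ↦ arctan(rβ/√Q)` at `0`, and
`x log(1 + a/x) = x log(x + a) - x log x → 0` with `x = r²`.
-/

open Filter Topology Real

theorem tendsto_arctan_mul_div_nhdsNE_zero (c : ℝ) :
    Tendsto (fun x => arctan (x * c) / x) (𝓝[≠] 0) (𝓝 c) := by
  have hderiv : HasDerivAt (fun x => arctan (x * c)) c 0 := by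
    simpa using (hasDerivAt_mul_const (x := (0 : ℝ)) c).arctan
  simpa [div_eq_inv_mul] using hderiv.tendsto_slope_zero

theorem tendsto_mul_log_one_add_div_nhdsNE_zero (a : ℝ) :
    Tendsto (fun x => x * log (1 + a / x)) (𝓝[≠] 0) (𝓝 0) := by
  rcases eq_or_ne a 0 with rfl | ha
  · simp
  have hcont : ContinuousAt (fun x => x * log (x + a) - x * log x) 0 :=
    (continuousAt_id.mul ((continuousAt_id.add continuousAt_const).log (by simpa))).sub
      continuous_mul_log.continuousAt
  have hsplit : ∀ᶠ x in 𝓝[≠] 0, x * log (x + a) - x * log x = x * log (1 + a / x) := by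
    have hxa : ∀ᶠ x in 𝓝[≠] (0 : ℝ), x + a ≠ 0 :=
      nhdsWithin_le_nhds ((continuous_id.add continuous_const).continuousAt.eventually_ne
        (by simpa))
    filter_upwards [hxa, self_mem_nhdsWithin] with x hxa (hx : x ≠ 0)
    rw [← mul_sub, ← log_div hxa hx, add_div, div_self hx, add_comm (1 : ℝ)]
  simpa using (hcont.tendsto.mono_left nhdsWithin_le_nhds).congr' hsplit

theorem tendsto_sq_nhdsNE_zero : Tendsto (fun x : ℝ => x ^ 2) (𝓝[≠] 0) (𝓝[≠] 0) :=
  tendsto_nhdsWithin_iff.mpr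
    ⟨by simpa using ((continuous_pow 2).tendsto (0 : ℝ)).mono_left nhdsWithin_le_nhds,
      eventually_nhdsWithin_of_forall fun _ hx => pow_ne_zero 2 hx⟩

theorem frolovHayward_small_r_expansion_general
    (β Q M : ℝ) (hQ : 0 < Q) (f : ℝ → ℝ)
    (hf : f = fun r => 1 - 2 * β ^ 2 * Q / 3 - 2 * M / r
      + 4 * β * (Q * Real.sqrt Q) / (3 * r) * (Real.pi / 2 - Real.arctan (r * β / Real.sqrt Q))
      + 2 * β ^ 4 * r ^ 2 / 3 * Real.log (1 + Q / (β ^ 2 * r ^ 2)))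
    (U : ℝ) (hU : U = Real.pi * β * (Q * Real.sqrt Q) / 3) :
    Tendsto (fun r => f r - 2 * (U - M) / r) (𝓝[>] (0 : ℝ))
      (𝓝 (1 - 2 * Q * β ^ 2)) := by
  subst hf hU
  have hsqrtQ : √Q ≠ 0 := (sqrt_pos.mpr hQ).ne'
  have harctan := (tendsto_arctan_mul_div_nhdsNE_zero (β / √Q)).const_mul (4 * β * (Q * √Q) / 3)
  have hlog := ((tendsto_mul_log_one_add_div_nhdsNE_zero (Q / β ^ 2)).comp
    tendsto_sq_nhdsNE_zero).const_mul (2 * β ^ 4 / 3)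
  have hlim := ((tendsto_const_nhds (x := 1 - 2 * β ^ 2 * Q / 3)).sub harctan).add hlog
  have hval : 1 - 2 * β ^ 2 * Q / 3 - 4 * β * (Q * √Q) / 3 * (β / √Q) + 2 * β ^ 4 / 3 * 0
      = 1 - 2 * Q * β ^ 2 := by
    field_simp
    ring
  rw [hval] at hlim
  refine (hlim.mono_left (nhdsGT_le_nhdsNE 0)).congr' ?_
  filter_upwards [self_mem_nhdsWithin] with r (hr : 0 < r)
  simp only [Function.comp_apply, mul_div_assoc, div_div]
  field_simp
  ring

/-- Small-`r` expansion of the Frolov--Hayward metric function: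
`f(r) - 2(U_self - M)/r → 1 - 2Qβ²` as `r → 0⁺`, where
`U_self = πβQ^{3/2}/3` is the point-charge self-energy. -/
theorem frolovHayward_small_r_expansion
    (β Q M : ℝ) (hβ : 0 < β) (hQ : 0 < Q) (f : ℝ → ℝ)
    (hf : f = fun r => 1 - 2 * β ^ 2 * Q / 3 - 2 * M / r
      + 4 * β * (Q * Real.sqrt Q) / (3 * r) * (Real.pi / 2 - Real.arctan (r * β / Real.sqrt Q))
      + 2 * β ^ 4 * r ^ 2 / 3 * Real.log (1 + Q / (β ^ 2 * r ^ 2)))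
    (U : ℝ) (hU : U = Real.pi * β * (Q * Real.sqrt Q) / 3) :
    Tendsto (fun r => f r - 2 * (U - M) / r) (𝓝[>] (0 : ℝ))
      (𝓝 (1 - 2 * Q * β ^ 2)) :=
  frolovHayward_small_r_expansion_general β Q M hQ f hf U hU
end

section
/- Let $\alpha > 0$, $Q > 0$, and $M < 0$, and define on $\Omega > \sqrt{Q}/\alpha$ the function $\tilde{f}(\Omega) = 2 \alpha^2 Q + \frac{4 \alpha Q^{3/2}}{3 \Omega} - \frac{2M}{\Omega} + 4 \Omega \alpha^3 \sqrt{Q} + 4 \alpha^4 \Omega^2 \log\left(1 - \frac{\sqrt{Q}}{\Omega \alpha}\right)$. Then $\lim_{\Omega \to \infty} \Omega\, \tilde{f}(\Omega) = -2M > 0$, and there exists $r_0 > \sqrt{Q}/\alpha$ with $\tilde{f}(r_0) = 0$. -/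
/-!
Put `x = √Q / (α Ω)`. The polynomial terms of `f̃` are exactly `4 α⁴ Ω²` times the first three
terms `x + x²/2 + x³/3` of the series of `-log (1 - x)`, so
`Ω f̃(Ω) = -2M + 4 α (√Q)³ R₃(x) / x³`, where `R₃(x) = x + x²/2 + x³/3 + log (1 - x) = O(x⁴)`.
This gives the limit at infinity, so `f̃ > 0` for large `Ω` when `M < 0`. At `Ω = √Q / α` the
logarithm diverges to `-∞` while the remaining terms stay bounded, so `f̃ < 0` near the
singularity, and the intermediate value theorem produces the axis `r₀`.
-/

open Filter Topology Set Finset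

theorem tendsto_sum_range_add_log_one_sub_div_pow (n : ℕ) :
    Tendsto (fun x : ℝ => (∑ i ∈ range n, x ^ (i + 1) / (i + 1) + Real.log (1 - x)) / x ^ n)
      (𝓝 0) (𝓝 0) := by
  have hbound : Tendsto (fun x : ℝ => |x| / (1 - |x|)) (𝓝 0) (𝓝 0) := by
    have : ContinuousAt (fun x : ℝ => |x| / (1 - |x|)) 0 := by fun_prop (disch := simp)
    simpa using this.tendsto
  refine squeeze_zero_norm' ?_ hbound
  filter_upwards [(continuous_abs.tendsto 0).eventually (gt_mem_nhds (show |(0 : ℝ)| < 1 by simp))]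
    with x hx
  rw [Real.norm_eq_abs, abs_div, abs_pow]
  refine div_le_of_le_mul₀ (by positivity) (div_nonneg (abs_nonneg x) (by linarith)) ?_
  calc _ ≤ |x| ^ (n + 1) / (1 - |x|) := Real.abs_log_sub_add_sum_range_le hx n
    _ = _ := by ring

theorem tendsto_log_one_sub_div_nhdsGT_atBot {c : ℝ} (hc : 0 < c) :
    Tendsto (fun x => Real.log (1 - c / x)) (𝓝[>] c) atBot := by
  refine Real.tendsto_log_nhdsGT_zero.comp
    (tendsto_nhdsWithin_of_tendsto_nhds_of_eventually_within _ ?_ ?_)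
  · have : ContinuousAt (fun x => 1 - c / x) c := by fun_prop (disch := positivity)
    simpa [hc.ne'] using this.tendsto.mono_left nhdsWithin_le_nhds
  · filter_upwards [self_mem_nhdsWithin] with x hx
    exact sub_pos.2 ((div_lt_one (hc.trans hx)).2 hx)

theorem exists_eq_of_tendsto_nhdsGT_atBot_of_eventually_ge
    {α δ : Type*} [ConditionallyCompleteLinearOrder α] [TopologicalSpace α] [OrderTopology α]
    [DenselyOrdered α] [NoMaxOrder α] [LinearOrder δ] [TopologicalSpace δ]
    [OrderClosedTopology δ] {f : α → δ} {c : α} {y : δ} (hf : ContinuousOn f (Ioi c))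
    (hbot : Tendsto f (𝓝[>] c) atBot) (htop : ∀ᶠ x in atTop, y ≤ f x) :
    ∃ r, c < r ∧ f r = y :=
  isPreconnected_Ioi.intermediate_value₂_eventually₂ (l₁ := 𝓝[>] c) inf_le_right
    (le_principal_iff.2 (Ioi_mem_atTop c)) hf continuousOn_const
    (hbot.eventually_le_atBot y) htop

noncomputable def regMaxMelvinMetricFun (α Q M Ω : ℝ) : ℝ :=
  2 * α ^ 2 * Q + 4 * α * (Q * Real.sqrt Q) / (3 * Ω) - 2 * M / Ω + 4 * Ω * α ^ 3 * Real.sqrt Q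
    + 4 * α ^ 4 * Ω ^ 2 * Real.log (1 - Real.sqrt Q / (Ω * α))

section RegMaxMelvin

variable {α Q : ℝ} (M : ℝ)

theorem mul_regMaxMelvinMetricFun (hα : α ≠ 0) (hQ : 0 < Q) {Ω : ℝ} (hΩ : Ω ≠ 0) :
    Ω * regMaxMelvinMetricFun α Q M Ω = -2 * M + 4 * α * Real.sqrt Q ^ 3 *
      ((∑ i ∈ range 3, (Real.sqrt Q / α / Ω) ^ (i + 1) / (i + 1)
        + Real.log (1 - Real.sqrt Q / α / Ω)) / (Real.sqrt Q / α / Ω) ^ 3) := by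
  have hs : 0 < Real.sqrt Q := Real.sqrt_pos.2 hQ
  have hsq : Real.sqrt Q ^ 2 = Q := Real.sq_sqrt hQ.le
  simp only [regMaxMelvinMetricFun, div_mul_eq_div_div_swap, sum_range_succ, sum_range_zero]
  generalize Real.log (1 - Real.sqrt Q / α / Ω) = L
  generalize Real.sqrt Q = s at hs hsq ⊢
  subst hsq
  push_cast
  field_simp
  ring

theorem tendsto_mul_regMaxMelvinMetricFun_atTop (hα : α ≠ 0) (hQ : 0 < Q) :
    Tendsto (fun Ω => Ω * regMaxMelvinMetricFun α Q M Ω) atTop (𝓝 (-2 * M)) := by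
  have hx : Tendsto (fun Ω => Real.sqrt Q / α / Ω) atTop (𝓝 0) :=
    tendsto_const_nhds.div_atTop tendsto_id
  have := (((tendsto_sum_range_add_log_one_sub_div_pow 3).comp hx).const_mul
    (4 * α * Real.sqrt Q ^ 3)).const_add (-2 * M)
  rw [mul_zero, add_zero] at this
  refine this.congr' ?_
  filter_upwards [eventually_ne_atTop 0] with Ω hΩ
  exact (mul_regMaxMelvinMetricFun M hα hQ hΩ).symm

theorem continuousOn_regMaxMelvinMetricFun (hα : 0 < α) :
    ContinuousOn (regMaxMelvinMetricFun α Q M) (Ioi (Real.sqrt Q / α)) := by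
  refine continuousOn_of_forall_continuousAt fun Ω hΩ => ?_
  have hΩ0 : 0 < Ω := lt_of_le_of_lt (by positivity) hΩ
  have hlog : 0 < 1 - Real.sqrt Q / (Ω * α) := by
    rw [div_mul_eq_div_div_swap]
    exact sub_pos.2 ((div_lt_one hΩ0).2 hΩ)
  unfold regMaxMelvinMetricFun
  fun_prop (disch := first | positivity | exact hlog.ne')

theorem tendsto_regMaxMelvinMetricFun_nhdsGT_atBot (hα : 0 < α) (hQ : 0 < Q) :
    Tendsto (regMaxMelvinMetricFun α Q M) (𝓝[>] (Real.sqrt Q / α)) atBot := by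
  set c := Real.sqrt Q / α
  have hc : 0 < c := div_pos (Real.sqrt_pos.2 hQ) hα
  have hbounded : ContinuousAt (fun Ω => 2 * α ^ 2 * Q + 4 * α * (Q * Real.sqrt Q) / (3 * Ω)
      - 2 * M / Ω + 4 * Ω * α ^ 3 * Real.sqrt Q) c := by
    fun_prop (disch := positivity)
  have hcoef : Tendsto (fun Ω => 4 * α ^ 4 * Ω ^ 2) (𝓝[>] c) (𝓝 (4 * α ^ 4 * c ^ 2)) :=
    ((by fun_prop : Continuous fun Ω : ℝ => 4 * α ^ 4 * Ω ^ 2).tendsto c).mono_left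
      nhdsWithin_le_nhds
  have := (hbounded.tendsto.mono_left nhdsWithin_le_nhds).add_atBot
    (hcoef.pos_mul_atBot (by positivity) (tendsto_log_one_sub_div_nhdsGT_atBot hc))
  simp only [c, ← div_mul_eq_div_div_swap] at this
  exact this

end RegMaxMelvin

/-- For `M < 0`, the RegMax Bonnor--Melvin metric function satisfies
`Ω·f̃(Ω) → -2M > 0` at infinity and vanishes at some `r₀ > √Q/α`
(existence of the axis of symmetry). -/
theorem regMax_melvin_axis_exists
    (α Q M : ℝ) (hα : 0 < α) (hQ : 0 < Q) (hM : M < 0) (F : ℝ → ℝ)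
    (hF : F = fun Ω => 2 * α ^ 2 * Q + 4 * α * (Q * Real.sqrt Q) / (3 * Ω)
      - 2 * M / Ω + 4 * Ω * α ^ 3 * Real.sqrt Q
      + 4 * α ^ 4 * Ω ^ 2 * Real.log (1 - Real.sqrt Q / (Ω * α))) :
    Tendsto (fun Ω => Ω * F Ω) atTop (𝓝 (-2 * M)) ∧
    0 < -2 * M ∧
    ∃ r0 : ℝ, Real.sqrt Q / α < r0 ∧ F r0 = 0 := by
  obtain rfl : F = regMaxMelvinMetricFun α Q M := hF
  have hlim := tendsto_mul_regMaxMelvinMetricFun_atTop M hα.ne' hQ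
  have hM2 : 0 < -2 * M := by linarith
  have hpos : ∀ᶠ Ω in atTop, 0 ≤ regMaxMelvinMetricFun α Q M Ω := by
    filter_upwards [hlim.eventually (lt_mem_nhds hM2), eventually_gt_atTop 0] with Ω hΩF hΩ
    exact (pos_of_mul_pos_right hΩF hΩ.le).le
  exact ⟨hlim, hM2, exists_eq_of_tendsto_nhdsGT_atBot_of_eventually_ge
    (continuousOn_regMaxMelvinMetricFun M hα)
    (tendsto_regMaxMelvinMetricFun_nhdsGT_atBot M hα hQ) hpos⟩
end

section
/- Let $\beta > 0$, $Q > 0$, $M \in \mathbb{R}$, and define on $\Omega > \sqrt{Q}/\beta$ the function $\tilde{f}(\Omega) = -\frac{2M}{\Omega} - \frac{2 \beta^2 Q}{3} - \frac{4 \beta Q^{3/2}}{3 \Omega} \cdot \frac{1}{2} \log\frac{\Omega\beta/\sqrt{Q} + 1}{\Omega\beta/\sqrt{Q} - 1} - \frac{2 \beta^4 \Omega^2}{3} \log\left(1 - \frac{Q}{\beta^2 \Omega^2}\right)$. Then $\lim_{\Omega \to (\sqrt{Q}/\beta)^+} \tilde{f}(\Omega) = -\frac{2 M \beta}{\sqrt{Q}}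 - \frac{2 \beta^2 Q}{3}\left(1 + \log 4\right)$. -/
open Filter Topology

/-- The Frolov--Hayward Bonnor--Melvin metric function has a finite one-sided
limit at the curvature singularity `Ω_s = √Q/β`:
`f̃ → -2Mβ/√Q - (2β²Q/3)(1 + log 4)`. -/
theorem frolovHayward_melvin_limit_at_singularity
    (β Q M : ℝ) (hβ : 0 < β) (hQ : 0 < Q) (F : ℝ → ℝ)
    (hF : F = fun Ω => -2 * M / Ω - 2 * β ^ 2 * Q / 3
      - 4 * β * (Q * Real.sqrt Q) / (3 * Ω)
        * ((1 / 2) * Real.log ((Ω * β / Real.sqrt Q + 1) / (Ω * β / Real.sqrt Q - 1)))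
      - 2 * β ^ 4 * Ω ^ 2 / 3 * Real.log (1 - Q / (β ^ 2 * Ω ^ 2))) :
    Tendsto F (𝓝[>] (Real.sqrt Q / β))
      (𝓝 (-2 * M * β / Real.sqrt Q - 2 * β ^ 2 * Q / 3 * (1 + Real.log 4))) := by
  have hs : 0 < Real.sqrt Q := Real.sqrt_pos.mpr hQ
  set s := Real.sqrt Q with hsdef
  have hsq : s ^ 2 = Q := Real.sq_sqrt hQ.le
  set Ω₀ : ℝ := s / β with hΩ₀def
  have hΩ₀pos : 0 < Ω₀ := div_pos hs hβ
  have hβΩ₀ : β * Ω₀ = s := by rw [hΩ₀def]; field_simp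
  -- auxiliary limits
  have hu : Tendsto (fun Ω => β * Ω - s) (𝓝[>] Ω₀) (𝓝[>] (0:ℝ)) := by
    apply tendsto_nhdsWithin_of_tendsto_nhds_of_eventually_within
    · have : Tendsto (fun Ω => β * Ω - s) (𝓝 Ω₀) (𝓝 (β * Ω₀ - s)) :=
        ((continuous_const.mul continuous_id).sub continuous_const).tendsto Ω₀
      rw [hβΩ₀, sub_self] at this
      exact this.mono_left nhdsWithin_le_nhds
    · filter_upwards [self_mem_nhdsWithin] with Ω hΩ
      have : β * Ω₀ < β * Ω := by
        exact mul_lt_mul_of_pos_left hΩ hβ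
      rw [hβΩ₀] at this
      exact sub_pos.mpr this
  have hxlog : Tendsto (fun x : ℝ => x * Real.log x) (𝓝[>] (0:ℝ)) (𝓝 0) := by
    have := tendsto_log_mul_rpow_nhdsGT_zero (one_pos)
    simpa [Real.rpow_one, mul_comm] using this
  have hkey : Tendsto (fun Ω => (β * Ω - s) * Real.log (β * Ω - s)) (𝓝[>] Ω₀) (𝓝 0) :=
    hxlog.comp hu
  -- nice form
  set A : ℝ → ℝ := fun Ω => -2 * M / Ω - 2 * β ^ 2 * Q / 3
      - (2 * β * (Q * s) / (3 * Ω) + 2 * β ^ 4 * Ω ^ 2 / 3) * Real.log (β * Ω + s)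
      + (4 * β ^ 4 * Ω ^ 2 / 3) * Real.log (β * Ω) with hA
  set B : ℝ → ℝ := fun Ω =>
      (-(2 * β / (3 * Ω)) * (β ^ 2 * Ω ^ 2 + β * Ω * s + s ^ 2))
        * ((β * Ω - s) * Real.log (β * Ω - s)) with hB
  have heq : F =ᶠ[𝓝[>] Ω₀] fun Ω => A Ω + B Ω := by
    filter_upwards [self_mem_nhdsWithin] with Ω hΩ
    have hΩ0 : (0:ℝ) < Ω := lt_trans hΩ₀pos hΩ
    have hβΩ : 0 < β * Ω := mul_pos hβ hΩ0
    have hsub : 0 < β * Ω - s := by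
      have : β * Ω₀ < β * Ω := mul_lt_mul_of_pos_left hΩ hβ
      rw [hβΩ₀] at this; linarith
    have hadd : 0 < β * Ω + s := by linarith
    have hlog1 : Real.log ((Ω * β / s + 1) / (Ω * β / s - 1))
        = Real.log (β * Ω + s) - Real.log (β * Ω - s) := by
      have e2pos : 0 < Ω * β / s - 1 :=
        sub_pos.mpr ((one_lt_div hs).mpr (by rw [mul_comm]; linarith))
      have h1 : (Ω * β / s + 1) / (Ω * β / s - 1) = (β * Ω + s) / (β * Ω - s) := by
        rw [div_eq_div_iff e2pos.ne' hsub.ne']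
        field_simp
      rw [h1, Real.log_div hadd.ne' hsub.ne']
    have hlog2 : Real.log (1 - Q / (β ^ 2 * Ω ^ 2))
        = Real.log (β * Ω - s) + Real.log (β * Ω + s) - 2 * Real.log (β * Ω) := by
      have h2 : 1 - Q / (β ^ 2 * Ω ^ 2) = ((β * Ω - s) * (β * Ω + s)) / (β * Ω) ^ 2 := by
        rw [← hsq]; field_simp; ring
      rw [h2, Real.log_div (by positivity) (by positivity),
        Real.log_mul hsub.ne' hadd.ne', Real.log_pow]
      push_cast; ring
    rw [hF]
    simp only [hA, hB]
    rw [hlog1, hlog2]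
    have hQe : Q = s ^ 2 := hsq.symm
    rw [hQe]
    field_simp
    ring
  rw [tendsto_congr' heq]
  -- limit of A
  have hAcont : Tendsto A (𝓝[>] Ω₀) (𝓝 (A Ω₀)) := by
    refine Tendsto.mono_left ?_ nhdsWithin_le_nhds
    have c1 : ContinuousAt (fun Ω : ℝ => Real.log (β * Ω + s)) Ω₀ := by
      apply ContinuousAt.log (by fun_prop)
      rw [hβΩ₀]; positivity
    have c2 : ContinuousAt (fun Ω : ℝ => Real.log (β * Ω)) Ω₀ := by
      apply ContinuousAt.log (by fun_prop)
      rw [hβΩ₀]; exact hs.ne'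
    have h3 : (3:ℝ) * Ω₀ ≠ 0 := mul_ne_zero (by norm_num) hΩ₀pos.ne'
    have c0 : ContinuousAt (fun Ω : ℝ => -2 * M / Ω) Ω₀ :=
      continuousAt_const.div continuousAt_id hΩ₀pos.ne'
    have c1a : ContinuousAt (fun Ω : ℝ => 2 * β * (Q * s) / (3 * Ω)) Ω₀ :=
      continuousAt_const.div (continuousAt_const.mul continuousAt_id) h3
    have c1b : ContinuousAt (fun Ω : ℝ => 2 * β ^ 4 * Ω ^ 2 / 3) Ω₀ := by fun_prop
    have c2b : ContinuousAt (fun Ω : ℝ => 4 * β ^ 4 * Ω ^ 2 / 3) Ω₀ := by fun_prop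
    exact (((c0.sub continuousAt_const).sub ((c1a.add c1b).mul c1)).add (c2b.mul c2)).tendsto
  have hBlim : Tendsto B (𝓝[>] Ω₀) (𝓝 0) := by
    have hc : Tendsto (fun Ω : ℝ => -(2 * β / (3 * Ω)) * (β ^ 2 * Ω ^ 2 + β * Ω * s + s ^ 2))
        (𝓝[>] Ω₀) (𝓝 (-(2 * β / (3 * Ω₀)) * (β ^ 2 * Ω₀ ^ 2 + β * Ω₀ * s + s ^ 2))) := by
      have h3 : (3:ℝ) * Ω₀ ≠ 0 := mul_ne_zero (by norm_num) hΩ₀pos.ne'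
      exact (((continuousAt_const.div (continuousAt_const.mul continuousAt_id) h3).neg.mul
        (by fun_prop)).tendsto).mono_left nhdsWithin_le_nhds
    have h := hc.mul hkey
    rw [mul_zero] at h
    exact h
  have := hAcont.add hBlim
  rw [add_zero] at this
  convert this using 2
  -- A Ω₀ equals the target value
  simp only [hA]
  rw [hβΩ₀]
  have hlog2s : Real.log (s + s) = Real.log 2 + Real.log s := by
    rw [show s + s = 2 * s by ring, Real.log_mul two_ne_zero hs.ne']
  have hlog4 : Real.log 4 = 2 * Real.log 2 := by
    rw [show (4:ℝ) = 2 ^ 2 by norm_num, Real.log_pow]; push_cast; ring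
  rw [hlog2s, hlog4, hΩ₀def]
  have hQe : Q = s ^ 2 := hsq.symm
  rw [hQe]
  field_simp
  ring
end

section
/- Let $Q > 0$, $M < 0$, and $\beta > \beta_c := -\frac{3M}{Q^{3/2}(1 + \log 4)}$, and define on $\Omega > \sqrt{Q}/\beta$ the function $\tilde{f}(\Omega) = -\frac{2M}{\Omega} - \frac{2 \beta^2 Q}{3} - \frac{4 \beta Q^{3/2}}{3 \Omega} \cdot \frac{1}{2} \log\frac{\Omega\beta/\sqrt{Q} + 1}{\Omega\beta/\sqrt{Q} - 1} - \frac{2 \beta^4 \Omega^2}{3} \log\left(1 - \frac{Q}{\beta^2 \Omega^2}\right)$. Then there exists $r_0 > \sqrt{Q}/\beta$ with $\tilde{f}(r_0) = 0$. -/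
/-!
Put `u = Ωβ/√Q`, so that `Ω > √Q/β` means `u > 1`. Then
`F Ω = (2β²Q/3) (a/u - g u)` with `a = -3M/(βQ√Q) > 0` and
`g u = 1 + log ((u+1)/(u-1)) / u + u² log (1 - 1/u²)`, and the hypothesis on `β`
says exactly `a < 1 + log 4`. Splitting the logarithms, the `log (u - 1)` terms of `g`
combine to `(u² + u + 1)/u · (u - 1) log (u - 1)`, so `g` extends continuously to `u = 1`
with value `1 + log 4`; and `log x ≤ x - 1` gives `g u ≤ 2/(u(u-1))`. Hence `a/u - g u`
is negative at `u = 1` and positive for large `u`, and the intermediate value theorem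
gives the zero.
-/

namespace FrolovHayward

open Real Set

noncomputable def profile (u : ℝ) : ℝ :=
  1 + log ((u + 1) / (u - 1)) / u + u ^ 2 * log (1 - 1 / u ^ 2)

noncomputable def profileExtension (u : ℝ) : ℝ :=
  1 + log (u + 1) / u + u ^ 2 * (log (u + 1) - 2 * log u)
    + (u ^ 2 + u + 1) / u * ((u - 1) * log (u - 1))

lemma profile_eq_profileExtension {u : ℝ} (hu : 1 < u) :
    profile u = profileExtension u := by
  have hu0 : 0 < u := by linarith
  have hsub : 0 < u - 1 := by linarith
  have hadd : 0 < u + 1 := by linarith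
  have hlog_quot : log ((u + 1) / (u - 1)) = log (u + 1) - log (u - 1) :=
    log_div hadd.ne' hsub.ne'
  have hlog_one_sub : log (1 - 1 / u ^ 2) = log (u - 1) + log (u + 1) - 2 * log u := by
    rw [show 1 - 1 / u ^ 2 = (u - 1) * (u + 1) / u ^ 2 by field_simp; ring,
      log_div (by positivity) (by positivity), log_mul hsub.ne' hadd.ne', log_pow]
    push_cast; ring
  rw [profile, profileExtension, hlog_quot, hlog_one_sub]
  field_simp
  ring

lemma continuousOn_profileExtension : ContinuousOn profileExtension (Ioi 0) := by
  have hmul_log : Continuous fun u : ℝ => (u - 1) * log (u - 1) :=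
    continuous_mul_log.comp (continuous_sub_right 1)
  refine fun u (hu : 0 < u) => ContinuousAt.continuousWithinAt ?_
  have := hmul_log.continuousAt (x := u)
  unfold profileExtension
  fun_prop (disch := positivity)

lemma profileExtension_one : profileExtension 1 = 1 + log 4 := by
  rw [profileExtension, show (4 : ℝ) = 2 ^ 2 by norm_num, log_pow]
  norm_num
  ring

lemma profile_le {u : ℝ} (hu : 1 < u) : profile u ≤ 2 / (u * (u - 1)) := by
  have hu0 : 0 < u := by linarith
  have hsub : 0 < u - 1 := by linarith
  have hlog_quot : log ((u + 1) / (u - 1)) ≤ 2 / (u - 1) := by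
    have := log_le_sub_one_of_pos (div_pos (by linarith : 0 < u + 1) hsub)
    rwa [div_sub_one hsub.ne', show u + 1 - (u - 1) = 2 by ring] at this
  have hlog_one_sub : log (1 - 1 / u ^ 2) ≤ -(1 / u ^ 2) := by
    have h : 0 < 1 - 1 / u ^ 2 := by
      rw [sub_pos, div_lt_one (by positivity)]; nlinarith
    linarith [log_le_sub_one_of_pos h]
  calc profile u ≤ 1 + 2 / (u - 1) / u + u ^ 2 * -(1 / u ^ 2) := by
        unfold profile; gcongr
    _ = 2 / (u * (u - 1)) := by field_simp; ring

lemma exists_profile_eq_div {a : ℝ} (ha : 0 < a) (ha' : a < 1 + log 4) :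
    ∃ u, 1 < u ∧ profile u = a / u := by
  set b := 2 + 2 / a
  have hb : 1 < b := by linarith [div_pos two_pos ha]
  have hneg : a / 1 - profileExtension 1 < 0 := by rw [profileExtension_one]; linarith
  have hpos : 0 < a / b - profileExtension b := by
    rw [← profile_eq_profileExtension hb]
    have hbound : 2 / (b * (b - 1)) < a / b := by
      rw [div_lt_div_iff₀ (by nlinarith) (by linarith)]
      have : a * (b - 1) = a + 2 := by simp only [b]; field_simp; ring
      nlinarith
    linarith [profile_le hb]
  have hcont : ContinuousOn (fun u => a / u - profileExtension u) (Icc 1 b) :=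
    ((continuousOn_const.div continuousOn_id fun u hu => (mem_Ioi.mp hu).ne').sub
      continuousOn_profileExtension).mono fun u hu => mem_Ioi.mpr (by linarith [hu.1])
  obtain ⟨u, hu, hroot⟩ := intermediate_value_Icc hb.le hcont ⟨hneg.le, hpos.le⟩
  have hu1 : 1 < u := lt_of_le_of_ne hu.1 (by rintro rfl; exact hneg.ne hroot)
  exact ⟨u, hu1, by rw [profile_eq_profileExtension hu1]; linarith⟩

end FrolovHayward

/-- For `M < 0` and `β` above the critical value
`β_c = -3M/(Q^{3/2}(1 + log 4))`, the Frolov--Hayward Bonnor--Melvin metric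
function vanishes at some `r₀ > √Q/β` (existence of the axis of symmetry). -/
theorem frolovHayward_melvin_axis_exists
    (β Q M : ℝ) (hQ : 0 < Q) (hM : M < 0)
    (hβ : β > -3 * M / ((Q * Real.sqrt Q) * (1 + Real.log 4))) (F : ℝ → ℝ)
    (hF : F = fun Ω => -2 * M / Ω - 2 * β ^ 2 * Q / 3
      - 4 * β * (Q * Real.sqrt Q) / (3 * Ω)
        * ((1 / 2) * Real.log ((Ω * β / Real.sqrt Q + 1) / (Ω * β / Real.sqrt Q - 1)))
      - 2 * β ^ 4 * Ω ^ 2 / 3 * Real.log (1 - Q / (β ^ 2 * Ω ^ 2))) :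
    ∃ r0 : ℝ, Real.sqrt Q / β < r0 ∧ F r0 = 0 := by
  set s := Real.sqrt Q
  have hs : 0 < s := Real.sqrt_pos.2 hQ
  have hs2 : s ^ 2 = Q := Real.sq_sqrt hQ.le
  have hβ0 : 0 < β := lt_trans (div_pos (by linarith) (by positivity)) hβ
  have ha : 0 < -3 * M / (β * (Q * s)) := div_pos (by linarith) (by positivity)
  have ha' : -3 * M / (β * (Q * s)) < 1 + Real.log 4 := by
    rw [gt_iff_lt, div_lt_iff₀ (by positivity)] at hβ
    rw [div_lt_iff₀ (by positivity)]
    linarith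
  obtain ⟨u, hu, hroot⟩ := FrolovHayward.exists_profile_eq_div ha ha'
  refine ⟨s * u / β, div_lt_div_of_pos_right (lt_mul_of_one_lt_right hs hu) hβ0, ?_⟩
  have hΩu : s * u / β * β / s = u := by field_simp
  have hQu : Q / (β ^ 2 * (s * u / β) ^ 2) = 1 / u ^ 2 := by rw [← hs2]; field_simp
  rw [hF]
  dsimp only
  rw [hΩu, hQu, ← hs2]
  rw [FrolovHayward.profile, ← hs2] at hroot
  field_simp at hroot ⊢
  linear_combination (-4 * β) * hroot
end
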